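/- Suppose S_B ⊆ S, that the backup set S_B is invariant under the flow Φ_π, and that Φ_π(x, T) ∈ S_B together with Φ_π(x,τ) ∈ S for all τ ∈ [0,T] implies Φ_π(x,t) ∈ S for all t ≥ 0. Then the set S_I defined in the previous context is invariant under Φ_π: for all x ∈ S_I and all t ≥ 0, Φ_π(x,t) ∈ S_I. -/
import Mathlib

open Set

/-- Invariance of the backup-constructed set `S_I` under the backup semiflow. -/
theorem backup_set_SI_invariant {n : ℕ} (T : ℝ) (hT : 0 < T)
    (h h_B : (Fin n → ℝ) → ℝ)
    (Φ : (Fin n → ℝ) → ℝ → (Fin n → ℝ))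
    (S S_B S_I : Set (Fin n → ℝ))
    (hSdef : S = {x | 0 ≤ h x}) (hSBdef : S_B = {x | 0 ≤ h_B x})
    (hSB_sub : S_B ⊆ S)
    (hflow0 : ∀ x, Φ x 0 = x)
    (hsemi : ∀ x s t, 0 ≤ s → 0 ≤ t → Φ (Φ x s) t = Φ x (s + t))
    (hSBinv : ∀ x ∈ S_B, ∀ t, 0 ≤ t → Φ x t ∈ S_B)
    (hreach : ∀ x, (∀ τ ∈ Icc (0:ℝ) T, Φ x τ ∈ S) → Φ x T ∈ S_B →
      ∀ t, 0 ≤ t → Φ x t ∈ S)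
    (hSIdef : S_I = {x | (∀ τ ∈ Icc (0:ℝ) T, Φ x τ ∈ S) ∧ Φ x T ∈ S_B}) :
    ∀ x ∈ S_I, ∀ t, 0 ≤ t → Φ x t ∈ S_I := by
  intro x hx t ht
  rw [hSIdef] at hx ⊢
  obtain ⟨hIcc, hB⟩ := hx
  constructor
  · intro τ hτ
    rw [hsemi x t τ ht hτ.1]
    exact hreach x hIcc hB (t + τ) (by linarith [hτ.1])
  · rw [hsemi x t T ht hT.le]
    have := hSBinv _ hB t ht
    rw [hsemi x T t hT.le ht] at this
    rwa [add_comm]
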